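/- The characteristic polynomial of the matrix Dₖ·C, where Dₖ = diag(e^{ik}, e^{−ik}, 1) and C = x·I + y·P₂ + (1−x−y)·P₃ with x² + y² − x − y + xy = 0, factors as (λ − 1)(λ² − (x + 2x cos k − 1)λ + 1). -/
import Mathlib


open Matrix Polynomial

noncomputable def P2 : Matrix (Fin 3) (Fin 3) ℂ := !![0,1,0; 0,0,1; 1,0,0]
noncomputable def P3 : Matrix (Fin 3) (Fin 3) ℂ := !![0,0,1; 1,0,0; 0,1,0]

noncomputable def Dk (k : ℝ) : Matrix (Fin 3) (Fin 3) ℂ :=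
  Matrix.diagonal ![Complex.exp (Complex.I * k), Complex.exp (-Complex.I * k), 1]

lemma charpoly_fin3 (a b c d e f g h i : ℂ) :
    (!![a,b,c;d,e,f;g,h,i]).charpoly =
      X^3 - Polynomial.C (a+e+i) * X^2
        + Polynomial.C (a*e+a*i+e*i-b*d-c*g-f*h) * X
        - Polynomial.C (a*e*i - a*f*h - b*d*i + b*f*g + c*d*h - c*e*g) := by
  rw [Matrix.charpoly, Matrix.det_fin_three]
  simp [charmatrix_apply_eq, charmatrix_apply_ne, Matrix.charmatrix]
  ring

theorem stmt_14 (k x y : ℝ) (h : x ^ 2 + y ^ 2 - x - y + x * y = 0)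
    (C : Matrix (Fin 3) (Fin 3) ℂ)
    (hC : C = (x : ℂ) • (1 : Matrix (Fin 3) (Fin 3) ℂ) + (y : ℂ) • P2 +
              ((1 - x - y : ℝ) : ℂ) • P3) :
    (Dk k * C).charpoly =
      (X - 1) * (X ^ 2 - Polynomial.C ((x + 2 * x * Real.cos k - 1 : ℝ) : ℂ) * X + 1) := by
  have hM : Dk k * C =
      !![Complex.exp (Complex.I * k) * x, Complex.exp (Complex.I * k) * y,
           Complex.exp (Complex.I * k) * ((1 - x - y : ℝ) : ℂ);
         Complex.exp (-Complex.I * k) * ((1 - x - y : ℝ) : ℂ),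
           Complex.exp (-Complex.I * k) * x, Complex.exp (-Complex.I * k) * y;
         (y:ℂ), ((1 - x - y : ℝ) : ℂ), (x:ℂ)] := by
    subst hC
    ext i j
    fin_cases i <;> fin_cases j <;>
      simp [Dk, P2, P3, Matrix.mul_apply, Fin.sum_univ_three, Matrix.one_apply,
        Matrix.vecHead, Matrix.vecTail] <;> ring
  set a : ℂ := Complex.exp (Complex.I * k) with ha
  set b : ℂ := Complex.exp (-Complex.I * k) with hb
  set z : ℂ := ((1 - x - y : ℝ) : ℂ) with hz
  have hab : a * b = 1 := by
    rw [ha, hb, ← Complex.exp_add]; ring_nf; exact Complex.exp_zero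
  have hsum : a + b = 2 * Complex.cos (k : ℂ) := by
    rw [ha, hb, Complex.cos]; ring_nf
  have h' : (x:ℂ) ^ 2 + (y:ℂ) ^ 2 - x - y + x * y = 0 := by
    exact_mod_cast congrArg (Complex.ofReal) h
  rw [hM, charpoly_fin3]
  have hzz : z = 1 - (x:ℂ) - (y:ℂ) := by push_cast [hz]; ring
  have e1 : a*x + b*x + (x:ℂ) = ((x + 2 * x * Real.cos k - 1 : ℝ) : ℂ) + 1 := by
    push_cast [Complex.ofReal_cos]
    linear_combination (x:ℂ) * hsum
  have e2 : a*x*(b*x) + a*x*(x:ℂ) + b*x*(x:ℂ) - a*y*(b*z) - a*z*(y:ℂ) - b*y*z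
      = ((x + 2 * x * Real.cos k - 1 : ℝ) : ℂ) + 1 := by
    rw [hzz]; push_cast [Complex.ofReal_cos]
    linear_combination ((x:ℂ)^2 - y*(1-x-y)) * hab + ((x:ℂ)^2 - y*(1-x-y)) * hsum
      + (1 + 2*Complex.cos (k:ℂ)) * h'
  have e3 : a*x*(b*x)*(x:ℂ) - a*x*(b*y)*z - a*y*(b*z)*(x:ℂ) + a*y*(b*y)*(y:ℂ)
      + a*z*(b*z)*z - a*z*(b*x)*(y:ℂ) = 1 := by
    rw [hzz]
    linear_combination ((x:ℂ)^3 + (y:ℂ)^3 + (1-(x:ℂ)-(y:ℂ))^3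
      - 3*(x:ℂ)*(y:ℂ)*(1-(x:ℂ)-(y:ℂ))) * hab + 3 * h'
  rw [e1, e2, e3]
  simp only [map_add, Polynomial.C_1]
  ring
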